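/- For every real x ≥ 0, 1 - Φ(x) > 2φ(x)/(√(4 + x²) + x); equivalently, 1 - Φ(x) > ((√(4 + x²) - x)/2)·φ(x) (Birnbaum's / Komatu's lower bound). -/

import Mathlib

open MeasureTheory Real

/-- Standard Gaussian density. -/
noncomputable def gaussPdf (x : ℝ) : ℝ := Real.exp (-x ^ 2 / 2) / Real.sqrt (2 * Real.pi)

/-- Standard Gaussian distribution function. -/
noncomputable def gaussCdf (x : ℝ) : ℝ := ∫ t in Set.Iic x, gaussPdf t

/-- Finite continued fraction `hcf k g x = x + 1/(x + 2/(⋯ + k/(g x)))`,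
with `hcf 0 g = g`. -/
noncomputable def hcf : ℕ → (ℝ → ℝ) → ℝ → ℝ
  | 0, g => g
  | (k + 1), g => hcf k (fun x => x + ((k : ℝ) + 1) / g x)

/-!
Write `r x = (√(4 + x²) - x) / 2`, the positive root of `r² + x r = 1`, and `s x = √(4 + x²)`.
Since `r' = -r / s` and `φ' = -x φ`, the relation `r² + x r = 1` collapses the derivative of the
gap `G = 1 - Φ - r φ` to `G' = -r³ φ / s < 0`. As `G → 0` at `+∞`, `G` is positive everywhere.
The two bounds coincide because `r = 2 / (s + x)`.
-/

open Filter Topology ProbabilityTheory Set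

lemma gaussPdf_eq_gaussianPDFReal : gaussPdf = gaussianPDFReal 0 1 := by
  ext x
  simp [gaussPdf, gaussianPDFReal, div_eq_inv_mul]

lemma gaussPdf_pos (x : ℝ) : 0 < gaussPdf x := by
  unfold gaussPdf
  positivity

lemma continuous_gaussPdf : Continuous gaussPdf := by
  unfold gaussPdf
  fun_prop

lemma integrable_gaussPdf : Integrable gaussPdf :=
  gaussPdf_eq_gaussianPDFReal ▸ integrable_gaussianPDFReal 0 1

lemma integral_gaussPdf : ∫ x, gaussPdf x = 1 := by
  rw [gaussPdf_eq_gaussianPDFReal]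
  exact integral_gaussianPDFReal_eq_one 0 one_ne_zero

lemma hasDerivAt_gaussPdf (x : ℝ) : HasDerivAt gaussPdf (-x * gaussPdf x) x := by
  have h : HasDerivAt (fun y : ℝ => -y ^ 2 / 2) (-x) x := by
    refine (((hasDerivAt_pow 2 x).neg).div_const 2).congr_deriv ?_
    ring
  unfold gaussPdf
  refine (h.exp.div_const √(2 * π)).congr_deriv ?_
  ring

lemma tendsto_gaussPdf_atTop : Tendsto gaussPdf atTop (𝓝 0) := by
  unfold gaussPdf
  have h : Tendsto (fun x : ℝ => -x ^ 2 / 2) atTop atBot :=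
    (tendsto_neg_atTop_atBot.comp (tendsto_pow_atTop two_ne_zero)).atBot_div_const two_pos
  simpa using (tendsto_exp_atBot.comp h).div_const √(2 * π)

lemma hasDerivAt_gaussCdf (x : ℝ) : HasDerivAt gaussCdf (gaussPdf x) x := by
  have hshift : (fun y => gaussCdf 0 + ∫ t in (0 : ℝ)..y, gaussPdf t) = gaussCdf := by
    ext y
    rw [gaussCdf, gaussCdf, ← intervalIntegral.integral_Iic_sub_Iic
      integrable_gaussPdf.integrableOn integrable_gaussPdf.integrableOn]
    ring
  exact hshift ▸ ((continuous_gaussPdf.integral_hasStrictDerivAt 0 x).hasDerivAt.const_add _)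

lemma one_sub_gaussCdf (x : ℝ) : 1 - gaussCdf x = ∫ t in Ioi x, gaussPdf t := by
  rw [← integral_gaussPdf, ← intervalIntegral.integral_Iic_add_Ioi
    integrable_gaussPdf.integrableOn integrable_gaussPdf.integrableOn, gaussCdf]
  ring

lemma tendsto_one_sub_gaussCdf_atTop : Tendsto (fun x => 1 - gaussCdf x) atTop (𝓝 0) := by
  simp_rw [one_sub_gaussCdf]
  exact tendsto_integral_Ioi_zero tendsto_id

lemma abs_lt_sqrt_four_add_sq (x : ℝ) : |x| < √(4 + x ^ 2) :=
  Real.lt_sqrt_of_sq_lt (by rw [sq_abs]; linarith)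

noncomputable def komatuFactor (x : ℝ) : ℝ := (√(4 + x ^ 2) - x) / 2

lemma komatuFactor_pos (x : ℝ) : 0 < komatuFactor x := by
  have := abs_lt_sqrt_four_add_sq x
  unfold komatuFactor
  linarith [le_abs_self x]

lemma sqrt_four_add_sq_eq (x : ℝ) : √(4 + x ^ 2) = 2 * komatuFactor x + x := by
  unfold komatuFactor
  ring

lemma komatuFactor_sq_add_mul_self (x : ℝ) : komatuFactor x ^ 2 + x * komatuFactor x = 1 := by
  have hs := Real.sq_sqrt (by positivity : (0 : ℝ) ≤ 4 + x ^ 2)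
  rw [sqrt_four_add_sq_eq] at hs
  linear_combination hs / 4

lemma komatuFactor_eq_two_div (x : ℝ) : komatuFactor x = 2 / (√(4 + x ^ 2) + x) := by
  have hpos : 0 < √(4 + x ^ 2) + x := by linarith [abs_lt_sqrt_four_add_sq x, neg_abs_le x]
  rw [eq_div_iff hpos.ne', sqrt_four_add_sq_eq]
  linear_combination 2 * komatuFactor_sq_add_mul_self x

lemma hasDerivAt_komatuFactor (x : ℝ) :
    HasDerivAt komatuFactor (-komatuFactor x / √(4 + x ^ 2)) x := by
  have hs : √(4 + x ^ 2) ≠ 0 := (sqrt_pos.mpr (by positivity)).ne'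
  have h := ((((hasDerivAt_pow 2 x).const_add 4).sqrt (by positivity)).sub
    (hasDerivAt_id x)).div_const 2
  unfold komatuFactor
  refine h.congr_deriv ?_
  field_simp
  ring

lemma tendsto_komatuFactor_atTop : Tendsto komatuFactor atTop (𝓝 0) := by
  rw [funext komatuFactor_eq_two_div]
  exact tendsto_const_nhds.div_atTop
    (tendsto_atTop_mono (fun x => le_add_of_nonneg_left (sqrt_nonneg _)) tendsto_id)

noncomputable def komatuGap (x : ℝ) : ℝ := 1 - gaussCdf x - komatuFactor x * gaussPdf x

lemma hasDerivAt_komatuGap (x : ℝ) :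
    HasDerivAt komatuGap (-(komatuFactor x ^ 3 * gaussPdf x / √(4 + x ^ 2))) x := by
  have h := ((hasDerivAt_const x 1).sub (hasDerivAt_gaussCdf x)).sub
    ((hasDerivAt_komatuFactor x).mul (hasDerivAt_gaussPdf x))
  refine h.congr_deriv ?_
  have hs : √(4 + x ^ 2) ≠ 0 := (sqrt_pos.mpr (by positivity)).ne'
  field_simp
  rw [sqrt_four_add_sq_eq]
  linear_combination gaussPdf x * (komatuFactor x + x) * komatuFactor_sq_add_mul_self x

lemma strictAnti_komatuGap : StrictAnti komatuGap :=
  strictAnti_of_hasDerivAt_neg hasDerivAt_komatuGap fun x =>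
    neg_neg_of_pos (div_pos (mul_pos (pow_pos (komatuFactor_pos x) 3) (gaussPdf_pos x))
      (sqrt_pos.mpr (by positivity)))

lemma tendsto_komatuGap_atTop : Tendsto komatuGap atTop (𝓝 0) := by
  have h := tendsto_one_sub_gaussCdf_atTop.sub
    (tendsto_komatuFactor_atTop.mul tendsto_gaussPdf_atTop)
  rwa [mul_zero, sub_zero] at h

lemma komatuGap_pos (x : ℝ) : 0 < komatuGap x :=
  (strictAnti_komatuGap.antitone.le_of_tendsto tendsto_komatuGap_atTop (x + 1)).trans_lt
    (strictAnti_komatuGap (lt_add_one x))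

theorem komatu_lower_bound_general (x : ℝ) :
    1 - gaussCdf x > 2 * gaussPdf x / (Real.sqrt (4 + x ^ 2) + x) ∧
    1 - gaussCdf x > (Real.sqrt (4 + x ^ 2) - x) / 2 * gaussPdf x := by
  have h : komatuFactor x * gaussPdf x < 1 - gaussCdf x := sub_pos.mp (komatuGap_pos x)
  refine ⟨?_, h⟩
  rwa [mul_div_right_comm, ← komatuFactor_eq_two_div]

/-- Birnbaum's / Komatu's lower bound. -/
theorem komatu_lower_bound (x : ℝ) (hx : 0 ≤ x) :
    1 - gaussCdf x > 2 * gaussPdf x / (Real.sqrt (4 + x ^ 2) + x) ∧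
    1 - gaussCdf x > (Real.sqrt (4 + x ^ 2) - x) / 2 * gaussPdf x :=
  komatu_lower_bound_general x
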